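/- arXiv:1501.02966 — 2 statements merged into one kernel-verified Lean document; each statement's English description precedes it below -/
import Mathlib

section
/- The anisotropic random walk on Z^2 with parameters (p_j) is recurrent (i.e., almost surely returns to the origin infinitely often) provided that the sum over k >= 0 of the reciprocals (sum_{j=-k}^{k} 1/p_j)^{-1} diverges, i.e., sum_{k=0}^{infinity} ( sum_{j=-k}^{k} 1/p_j )^{-1} = infinity. -/
open MeasureTheory ProbabilityTheory Filter Asymptotics Set

noncomputable section

/-- One-step transition probabilities of the anisotropic random walk on `ℤ²`
with parameters `p`. -/
def aniTransProb (p : ℤ → ℝ) (u v : ℤ × ℤ) : ℝ :=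
  if v = (u.1 + 1, u.2) ∨ v = (u.1 - 1, u.2) then 1 / 2 - p u.2
  else if v = (u.1, u.2 + 1) ∨ v = (u.1, u.2 - 1) then p u.2
  else 0

/-- `C` is an anisotropic random walk on `ℤ²` with parameters `p`, under the
probability measure `P`: it starts at the origin and has the Markov transition
probabilities `aniTransProb p`. -/
structure IsAnisotropicWalk {Ω : Type*} [MeasurableSpace Ω]
    (p : ℤ → ℝ) (P : Measure Ω) (C : ℕ → Ω → ℤ × ℤ) : Prop where
  meas : ∀ n, Measurable (C n)
  init : ∀ ω, C 0 ω = (0, 0)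
  step : ∀ (N : ℕ) (h : ℕ → ℤ × ℤ) (v : ℤ × ℤ),
    P {ω | (∀ i ≤ N, C i ω = h i) ∧ C (N + 1) ω = v}
      = ENNReal.ofReal (aniTransProb p (h N) v) * P {ω | ∀ i ≤ N, C i ω = h i}

/-- `S` is a simple symmetric random walk on `ℤ`: `S 0 = 0` and the increments
are i.i.d. with values `±1`, each with probability `1/2`. -/
structure IsSSRW {Ω : Type*} [MeasurableSpace Ω] (P : Measure Ω)
    (S : ℕ → Ω → ℤ) : Prop where
  meas : ∀ n, Measurable (S n)
  init : ∀ ω, S 0 ω = 0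
  indep : iIndepFun
    (fun n ω => S (n + 1) ω - S n ω) P
  plus : ∀ n, P {ω | S (n + 1) ω - S n ω = 1} = 1 / 2
  minus : ∀ n, P {ω | S (n + 1) ω - S n ω = -1} = 1 / 2

/-- `W` is a standard Wiener process (Brownian motion): it starts at `0`, has
continuous paths on `[0,∞)`, independent increments, and its increments over
`[s,t]` are centered Gaussian with variance `t - s`. -/
structure IsBrownianMotion {Ω : Type*} [MeasurableSpace Ω] (P : Measure Ω)
    (W : ℝ → Ω → ℝ) : Prop where
  meas : ∀ t, Measurable (W t)
  init : ∀ ω, W 0 ω = 0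
  cont : ∀ ω, ContinuousOn (fun t => W t ω) (Set.Ici 0)
  gauss : ∀ s t : ℝ, 0 ≤ s → s ≤ t →
    Measure.map (fun ω => W t ω - W s ω) P = gaussianReal 0 (Real.toNNReal (t - s))
  indepIncr : ∀ t : ℕ → ℝ, Monotone t → 0 ≤ t 0 →
    iIndepFun
      (fun i ω => W (t (i + 1)) ω - W (t i) ω) P

end

/-!
The probability `exitProb p n x` that the walk started at `x` leaves `[-n, n]²` before visiting
the origin is harmonic off the origin, and the walk is reversible, i.e. an electrical network.
By Green's identity the current `θₙ` flowing out of the origin equals the energy of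
`exitProb p n`. Cauchy–Schwarz on the edges leaving each box `[-m, m]²`, whose conductances add up
to `∑_{|j| ≤ m} 1 / p j`, bounds this energy from below (Nash-Williams), so that
`θₙ * ∑_{m ≤ n} (∑_{|j| ≤ m} 1 / p j)⁻¹ ≤ 1` and `θₙ → 0`. Harnack's inequality along paths
avoiding the origin turns this into `exitProb p n x → 0` for every `x ≠ 0`: from every site the
walk visits the origin almost surely, hence, by the Markov property, after every time `M`.
-/

open scoped ENNReal Topology

noncomputable section

theorem ENNReal.tendsto_tsum_of_dominated_convergence {ι : Type*} {F : ℕ → ι → ℝ≥0∞}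
    {f : ι → ℝ≥0∞} (bound : ι → ℝ≥0∞) (h_bound : ∀ n i, F n i ≤ bound i)
    (h_fin : ∑' i, bound i ≠ ∞) (h_lim : ∀ i, Tendsto (F · i) atTop (𝓝 (f i))) :
    Tendsto (fun n ↦ ∑' i, F n i) atTop (𝓝 (∑' i, f i)) := by
  let : MeasurableSpace ι := ⊤
  have : MeasurableSingletonClass ι := ⟨fun _ ↦ trivial⟩
  simp only [← lintegral_count]
  exact tendsto_lintegral_of_dominated_convergence bound (fun _ ↦ measurable_from_top)
    (fun n ↦ Eventually.of_forall (h_bound n)) (by rwa [lintegral_count])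
    (Eventually.of_forall h_lim)

namespace AnisotropicWalk

open Relation
open scoped Classical

variable {p : ℤ → ℝ}

section MarkovOperator

variable (p) in
def markovOp (f : ℤ × ℤ → ℝ) (x : ℤ × ℤ) : ℝ :=
  (1 / 2 - p x.2) * (f (x.1 + 1, x.2) + f (x.1 - 1, x.2)) +
    p x.2 * (f (x.1, x.2 + 1) + f (x.1, x.2 - 1))

theorem markovOp_mono (hp : ∀ j, p j ∈ Ioc (0 : ℝ) (1 / 2)) {f g : ℤ × ℤ → ℝ}
    (h : f ≤ g) (x : ℤ × ℤ) : markovOp p f x ≤ markovOp p g x := by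
  have := hp x.2
  unfold markovOp
  gcongr <;> first | linarith [this.1, this.2] | exact h _

theorem markovOp_const (c : ℝ) (x : ℤ × ℤ) : markovOp p (fun _ ↦ c) x = c := by
  unfold markovOp; ring

theorem markovOp_mem_Icc (hp : ∀ j, p j ∈ Ioc (0 : ℝ) (1 / 2)) {f : ℤ × ℤ → ℝ}
    (h : ∀ y, f y ∈ Icc (0 : ℝ) 1) (x : ℤ × ℤ) : markovOp p f x ∈ Icc (0 : ℝ) 1 := by
  constructor
  · simpa [markovOp_const] using markovOp_mono hp (fun y ↦ (h y).1) x
  · simpa [markovOp_const] using markovOp_mono hp (fun y ↦ (h y).2) x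

end MarkovOperator

section AvoidProb

variable (p) in
/-- The probability that the walk started at `x` does not visit the origin at the times
`0, …, m` that precede its first exit from `D`. -/
def avoidProb (D : Set (ℤ × ℤ)) : ℕ → ℤ × ℤ → ℝ
  | 0 => fun x ↦ if x = 0 then 0 else 1
  | m + 1 => fun x ↦ if x = 0 then 0 else if x ∈ D then markovOp p (avoidProb D m) x else 1

variable {D D' : Set (ℤ × ℤ)}

theorem avoidProb_origin (D : Set (ℤ × ℤ)) (m : ℕ) : avoidProb p D m 0 = 0 := by
  cases m <;> simp [avoidProb]

theorem avoidProb_of_notMem {x : ℤ × ℤ} (hx : x ≠ 0) (hD : x ∉ D) (m : ℕ) :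
    avoidProb p D m x = 1 := by
  cases m <;> simp [avoidProb, hx, hD]

theorem avoidProb_succ_of_mem {x : ℤ × ℤ} (hx : x ≠ 0) (hD : x ∈ D) (m : ℕ) :
    avoidProb p D (m + 1) x = markovOp p (avoidProb p D m) x := by
  simp [avoidProb, hx, hD]

theorem avoidProb_mem_Icc (hp : ∀ j, p j ∈ Ioc (0 : ℝ) (1 / 2)) (D : Set (ℤ × ℤ))
    (m : ℕ) (x : ℤ × ℤ) : avoidProb p D m x ∈ Icc (0 : ℝ) 1 := by
  induction m generalizing x with
  | zero => unfold avoidProb; split_ifs <;> norm_num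
  | succ m ih =>
    unfold avoidProb; split_ifs
    · norm_num
    · exact markovOp_mem_Icc hp ih x
    · norm_num

theorem avoidProb_succ_le (hp : ∀ j, p j ∈ Ioc (0 : ℝ) (1 / 2)) (D : Set (ℤ × ℤ))
    (m : ℕ) : avoidProb p D (m + 1) ≤ avoidProb p D m := by
  induction m with
  | zero =>
    intro x
    by_cases hx : x = 0
    · simp [hx, avoidProb_origin]
    · simpa [avoidProb, hx] using (avoidProb_mem_Icc hp D 1 x).2
  | succ m ih =>
    intro x
    unfold avoidProb
    split_ifs
    · rfl
    · exact markovOp_mono hp ih x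
    · rfl

theorem avoidProb_anti (hp : ∀ j, p j ∈ Ioc (0 : ℝ) (1 / 2)) (h : D ⊆ D') (m : ℕ) :
    avoidProb p D' m ≤ avoidProb p D m := by
  induction m with
  | zero => exact le_rfl
  | succ m ih =>
    intro x
    by_cases hx : x = 0
    · simp [hx, avoidProb_origin]
    by_cases hD : x ∈ D
    · rw [avoidProb_succ_of_mem hx hD, avoidProb_succ_of_mem hx (h hD)]
      exact markovOp_mono hp ih x
    · rw [avoidProb_of_notMem hx hD]
      exact (avoidProb_mem_Icc hp D' _ x).2

end AvoidProb

section ExitProb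

def box (n : ℕ) : Set (ℤ × ℤ) := Icc (-(n : ℤ)) n ×ˢ Icc (-(n : ℤ)) n

theorem mem_box {n : ℕ} {x : ℤ × ℤ} :
    x ∈ box n ↔ -(n : ℤ) ≤ x.1 ∧ x.1 ≤ n ∧ -(n : ℤ) ≤ x.2 ∧ x.2 ≤ n := by
  simp only [box, Set.mem_prod, Set.mem_Icc, and_assoc]

variable (p) in
/-- The probability that the walk started at `x` leaves `box n` before visiting the origin. -/
def exitProb (n : ℕ) (x : ℤ × ℤ) : ℝ := ⨅ m, avoidProb p (box n) m x

theorem bddBelow_range_avoidProb (hp : ∀ j, p j ∈ Ioc (0 : ℝ) (1 / 2)) (D : Set (ℤ × ℤ))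
    (x : ℤ × ℤ) : BddBelow (range fun m ↦ avoidProb p D m x) :=
  ⟨0, by rintro _ ⟨m, rfl⟩; exact (avoidProb_mem_Icc hp D m x).1⟩

theorem tendsto_avoidProb_iInf (hp : ∀ j, p j ∈ Ioc (0 : ℝ) (1 / 2)) (D : Set (ℤ × ℤ))
    (x : ℤ × ℤ) :
    Tendsto (fun m ↦ avoidProb p D m x) atTop (𝓝 (⨅ m, avoidProb p D m x)) :=
  tendsto_atTop_ciInf (antitone_nat_of_succ_le fun m ↦ avoidProb_succ_le hp D m x)
    (bddBelow_range_avoidProb hp D x)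

theorem exitProb_mem_Icc (hp : ∀ j, p j ∈ Ioc (0 : ℝ) (1 / 2)) (n : ℕ) (x : ℤ × ℤ) :
    exitProb p n x ∈ Icc (0 : ℝ) 1 :=
  isClosed_Icc.mem_of_tendsto (tendsto_avoidProb_iInf hp (box n) x)
    (Eventually.of_forall fun m ↦ avoidProb_mem_Icc hp _ m x)

theorem exitProb_origin (n : ℕ) : exitProb p n 0 = 0 := by
  simp [exitProb, avoidProb_origin]

theorem exitProb_of_notMem {n : ℕ} {x : ℤ × ℤ} (hx : x ∉ box n) : exitProb p n x = 1 := by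
  have hx0 : x ≠ 0 := by rintro rfl; simp [mem_box] at hx
  simp [exitProb, avoidProb_of_notMem hx0 hx]

theorem markovOp_exitProb (hp : ∀ j, p j ∈ Ioc (0 : ℝ) (1 / 2)) {n : ℕ} {x : ℤ × ℤ}
    (hx : x ≠ 0) (hD : x ∈ box n) :
    markovOp p (exitProb p n) x = exitProb p n x := by
  have hlim : Tendsto (fun m ↦ markovOp p (avoidProb p (box n) m) x) atTop
      (𝓝 (markovOp p (exitProb p n) x)) := by
    have t := fun y ↦ tendsto_avoidProb_iInf hp (box n) y
    exact (((t _).add (t _)).const_mul _).add (((t _).add (t _)).const_mul _)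
  refine tendsto_nhds_unique (hlim.congr fun m ↦ ?_)
    ((tendsto_avoidProb_iInf hp (box n) x).comp (tendsto_add_atTop_nat 1))
  exact (avoidProb_succ_of_mem hx hD m).symm

theorem iInf_avoidProb_univ_le_exitProb (hp : ∀ j, p j ∈ Ioc (0 : ℝ) (1 / 2)) (n : ℕ) (x : ℤ × ℤ) :
    ⨅ m, avoidProb p univ m x ≤ exitProb p n x :=
  ciInf_mono (bddBelow_range_avoidProb hp univ x) fun m ↦ avoidProb_anti hp (subset_univ _) m x

end ExitProb

section Summation

theorem sum_Icc_sub_pred {M : Type*} [AddCommGroup M] (F : ℤ → M) {a b : ℤ} (hab : a - 1 ≤ b) :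
    ∑ k ∈ Finset.Icc a b, (F k - F (k - 1)) = F b - F (a - 1) := by
  induction b, hab using Int.leInduction with
  | base => simp
  | succ b hb ih =>
    rw [← Finset.insert_Icc_right_eq_Icc_add_one (by omega), Finset.sum_insert (by simp),
      ih, add_sub_cancel_right]
    abel

theorem sum_Icc_by_parts {R : Type*} [CommRing R] (f g : ℤ → R) {a b : ℤ} (hab : a - 1 ≤ b)
    (ha : g (a - 1) = 0) (hb : g (b + 1) = 0) :
    ∑ k ∈ Finset.Icc (a - 1) b, f k * (g (k + 1) - g k) =
      ∑ k ∈ Finset.Icc a b, g k * (f (k - 1) - f k) := by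
  have hsplit : ∀ k, f k * (g (k + 1) - g k) =
      (f k * g (k + 1) - f (k - 1) * g (k - 1 + 1)) + g k * (f (k - 1) - f k) := by
    intro k; rw [sub_add_cancel]; ring
  rw [Finset.sum_congr rfl fun k _ ↦ hsplit k, Finset.sum_add_distrib,
    sum_Icc_sub_pred (fun k ↦ f k * g (k + 1)) (by omega), hb, sub_add_cancel, ha,
    ← Finset.insert_Icc_add_one_left_eq_Icc hab, Finset.sum_insert (by simp), ha, sub_add_cancel]
  ring

end Summation

section Network

/-! The walk is reversible with respect to `π (k, j) = (p j)⁻¹`; the conductances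
`π x * aniTransProb p x y` are `hCond p j` on the horizontal edges of row `j` and `1` on the
vertical edges. -/

variable (p)

def hCond (j : ℤ) : ℝ := (1 / 2 - p j) / p j

def hCurrent (f : ℤ × ℤ → ℝ) (k j : ℤ) : ℝ := hCond p j * (f (k, j) - f (k + 1, j))

def vCurrent (f : ℤ × ℤ → ℝ) (k j : ℤ) : ℝ := f (k, j) - f (k, j + 1)

def divergence (f : ℤ × ℤ → ℝ) (x : ℤ × ℤ) : ℝ :=
  hCurrent p f x.1 x.2 - hCurrent p f (x.1 - 1) x.2 + vCurrent f x.1 x.2 -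
    vCurrent f x.1 (x.2 - 1)

/-- The energy of the horizontal edge from `(k, j)` plus that of the vertical edge from `(j, k)`. -/
def edgeEnergy (f : ℤ × ℤ → ℝ) (j k : ℤ) : ℝ :=
  hCond p j * (f (k + 1, j) - f (k, j)) ^ 2 + (f (j, k + 1) - f (j, k)) ^ 2

def energy (f : ℤ × ℤ → ℝ) (n : ℕ) : ℝ :=
  ∑ j ∈ Finset.Icc (-(n : ℤ)) n, ∑ k ∈ Finset.Icc (-(n : ℤ) - 1) n, edgeEnergy p f j k

/-- The energy of the edges leaving `box m`. -/
def cutEnergy (f : ℤ × ℤ → ℝ) (m : ℕ) : ℝ :=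
  ∑ j ∈ Finset.Icc (-(m : ℤ)) m, (edgeEnergy p f j m + edgeEnergy p f j (-(m : ℤ) - 1))

/-- The current leaving `box m` through the edges in row `j` and in column `j`. -/
def cutCurrent (f : ℤ × ℤ → ℝ) (m : ℕ) (j : ℤ) : ℝ :=
  hCurrent p f m j - hCurrent p f (-(m : ℤ) - 1) j + vCurrent f j m - vCurrent f j (-(m : ℤ) - 1)

def cutConductance (m : ℕ) : ℝ := ∑ j ∈ Finset.Icc (-(m : ℤ)) m, (p j)⁻¹

variable {p}

theorem divergence_eq (hp : ∀ j, p j ∈ Ioc (0 : ℝ) (1 / 2)) (f : ℤ × ℤ → ℝ) (x : ℤ × ℤ) :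
    divergence p f x = (p x.2)⁻¹ * (f x - markovOp p f x) := by
  have := (hp x.2).1.ne'
  simp only [divergence, hCurrent, vCurrent, hCond, markovOp, sub_add_cancel]
  field_simp
  ring

theorem hCond_nonneg (hp : ∀ j, p j ∈ Ioc (0 : ℝ) (1 / 2)) (j : ℤ) : 0 ≤ hCond p j :=
  div_nonneg (by linarith [(hp j).2]) (hp j).1.le

theorem edgeEnergy_nonneg (hp : ∀ j, p j ∈ Ioc (0 : ℝ) (1 / 2)) (f : ℤ × ℤ → ℝ) (j k : ℤ) :
    0 ≤ edgeEnergy p f j k := by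
  have := hCond_nonneg hp j
  unfold edgeEnergy
  positivity

theorem sum_box_eq_apply_zero {m : ℕ} {F : ℤ × ℤ → ℝ} (hF : ∀ x ∈ box m, x ≠ 0 → F x = 0) :
    ∑ a ∈ Finset.Icc (-(m : ℤ)) m, ∑ b ∈ Finset.Icc (-(m : ℤ)) m, F (a, b) = F 0 := by
  rw [← Finset.sum_product' (f := fun a b ↦ F (a, b)), Finset.sum_eq_single (0 : ℤ × ℤ)]
  · rintro x hx hx0
    exact hF x (by simpa [mem_box, and_assoc] using hx) hx0
  · simp

/-- Green's identity, by summation by parts against `1 - f`, which vanishes off `box n`. -/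
theorem energy_eq {f : ℤ × ℤ → ℝ} {n : ℕ} (hout : ∀ x ∉ box n, f x = 1)
    (hharm : ∀ x ∈ box n, x ≠ 0 → divergence p f x = 0) :
    energy p f n = -((1 - f 0) * divergence p f 0) := by
  set φ : ℤ × ℤ → ℝ := fun x ↦ 1 - f x
  have hφ : ∀ x ∉ box n, φ x = 0 := fun x hx ↦ by simp [φ, hout x hx]
  have hrow : ∀ j, ∑ k ∈ Finset.Icc (-(n : ℤ) - 1) n, hCond p j * (f (k + 1, j) - f (k, j)) ^ 2 =
      ∑ k ∈ Finset.Icc (-(n : ℤ)) n, φ (k, j) * (hCurrent p f (k - 1) j - hCurrent p f k j) := by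
    intro j
    rw [← sum_Icc_by_parts (fun k ↦ hCurrent p f k j) (fun k ↦ φ (k, j)) (by omega)
      (hφ _ (by simp [mem_box])) (hφ _ (by simp [mem_box]))]
    exact Finset.sum_congr rfl fun k _ ↦ by simp only [hCurrent, φ]; ring
  have hcol : ∀ j, ∑ k ∈ Finset.Icc (-(n : ℤ) - 1) n, (f (j, k + 1) - f (j, k)) ^ 2 =
      ∑ k ∈ Finset.Icc (-(n : ℤ)) n, φ (j, k) * (vCurrent f j (k - 1) - vCurrent f j k) := by
    intro j
    rw [← sum_Icc_by_parts (fun k ↦ vCurrent f j k) (fun k ↦ φ (j, k)) (by omega)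
      (hφ _ (by simp [mem_box])) (hφ _ (by simp [mem_box]))]
    exact Finset.sum_congr rfl fun k _ ↦ by simp only [vCurrent, φ]; ring
  have hbox : ∀ x ∈ box n, x ≠ 0 → -(φ x * divergence p f x) = 0 := fun x hx hx0 ↦ by
    simp [hharm x hx hx0]
  simp only [energy, edgeEnergy, Finset.sum_add_distrib, hrow, hcol]
  rw [Finset.sum_comm, ← Finset.sum_add_distrib, ← sum_box_eq_apply_zero hbox]
  refine Finset.sum_congr rfl fun a _ ↦ ?_
  rw [← Finset.sum_add_distrib]
  exact Finset.sum_congr rfl fun b _ ↦ by simp only [divergence]; ring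

end Network

section NashWilliams

theorem sum_range_add_neg_eq_sum_Icc {M : Type*} [AddCommMonoid M] (F : ℤ → M) (n : ℕ) :
    ∑ m ∈ Finset.range (n + 1), (F m + F (-(m : ℤ) - 1)) =
      ∑ k ∈ Finset.Icc (-(n : ℤ) - 1) n, F k := by
  induction n with
  | zero =>
    rw [show Finset.Icc (-((0 : ℕ) : ℤ) - 1) ((0 : ℕ) : ℤ) = {0, -1} by ext k; simp; omega,
      Finset.sum_pair (by norm_num)]
    simp
  | succ n ih =>
    have hIcc : Finset.Icc (-((n + 1 : ℕ) : ℤ) - 1) ((n + 1 : ℕ) : ℤ) =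
        insert ((n : ℤ) + 1) (insert (-(n : ℤ) - 2) (Finset.Icc (-(n : ℤ) - 1) n)) := by
      ext k; simp only [Finset.mem_Icc, Finset.mem_insert]; omega
    rw [Finset.sum_range_succ, ih, hIcc,
      Finset.sum_insert (by simp only [Finset.mem_insert, Finset.mem_Icc]; omega),
      Finset.sum_insert (by simp only [Finset.mem_Icc]; omega)]
    push_cast
    rw [show -((n : ℤ) + 1) - 1 = -(n : ℤ) - 2 by ring]
    abel

theorem cutConductance_pos (hp : ∀ j, p j ∈ Ioc (0 : ℝ) (1 / 2)) (m : ℕ) :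
    0 < cutConductance p m :=
  Finset.sum_pos (fun j _ ↦ inv_pos.mpr (hp j).1) ⟨0, by simp⟩

theorem sum_cutEnergy_le_energy (hp : ∀ j, p j ∈ Ioc (0 : ℝ) (1 / 2)) (f : ℤ × ℤ → ℝ) (n : ℕ) :
    ∑ m ∈ Finset.range (n + 1), cutEnergy p f m ≤ energy p f n := by
  have hE := edgeEnergy_nonneg hp f
  calc ∑ m ∈ Finset.range (n + 1), cutEnergy p f m
      ≤ ∑ m ∈ Finset.range (n + 1), ∑ j ∈ Finset.Icc (-(n : ℤ)) n,
          (edgeEnergy p f j m + edgeEnergy p f j (-(m : ℤ) - 1)) := by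
        refine Finset.sum_le_sum fun m hm ↦ Finset.sum_le_sum_of_subset_of_nonneg ?_
          fun j _ _ ↦ add_nonneg (hE _ _) (hE _ _)
        have := Finset.mem_range.mp hm
        exact Finset.Icc_subset_Icc (by omega) (by omega)
    _ = energy p f n := by
        rw [Finset.sum_comm]
        exact Finset.sum_congr rfl fun j _ ↦ sum_range_add_neg_eq_sum_Icc (edgeEnergy p f j) n

theorem sq_weighted_sum_le {c a b d e : ℝ} (hc : 0 ≤ c) :
    (c * a + c * b + d + e) ^ 2 ≤ (2 * c + 2) * (c * a ^ 2 + c * b ^ 2 + d ^ 2 + e ^ 2) := by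
  nlinarith [mul_nonneg (mul_nonneg hc hc) (sq_nonneg (a - b)),
    mul_nonneg hc (sq_nonneg (a - d)), mul_nonneg hc (sq_nonneg (a - e)),
    mul_nonneg hc (sq_nonneg (b - d)), mul_nonneg hc (sq_nonneg (b - e)), sq_nonneg (d - e)]

/-- Cauchy–Schwarz on the four edges leaving `box m` in row and column `j`, whose conductances
add up to `(p j)⁻¹`. -/
theorem sq_cutCurrent_le (hp : ∀ j, p j ∈ Ioc (0 : ℝ) (1 / 2)) (f : ℤ × ℤ → ℝ) (m : ℕ) (j : ℤ) :
    cutCurrent p f m j ^ 2 ≤ (p j)⁻¹ * (edgeEnergy p f j m + edgeEnergy p f j (-(m : ℤ) - 1)) := by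
  have hinv : (p j)⁻¹ = 2 * hCond p j + 2 := by
    have := (hp j).1.ne'
    unfold hCond; field_simp; ring
  have key := sq_weighted_sum_le (hCond_nonneg hp j) (a := f (m, j) - f (m + 1, j))
    (b := f (-(m : ℤ), j) - f (-(m : ℤ) - 1, j)) (d := f (j, m) - f (j, m + 1))
    (e := f (j, -(m : ℤ)) - f (j, -(m : ℤ) - 1))
  rw [hinv]
  simp only [cutCurrent, hCurrent, vCurrent, edgeEnergy, sub_add_cancel]
  convert key using 2 <;> ring

theorem sum_cutCurrent_eq_divergence {f : ℤ × ℤ → ℝ} {n m : ℕ}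
    (hharm : ∀ x ∈ box n, x ≠ 0 → divergence p f x = 0) (hm : m ≤ n) :
    ∑ j ∈ Finset.Icc (-(m : ℤ)) m, cutCurrent p f m j = divergence p f 0 := by
  have hbox : ∀ x ∈ box m, x ≠ 0 → divergence p f x = 0 := fun x hx ↦
    hharm x (by rw [mem_box] at hx ⊢; omega)
  rw [← sum_box_eq_apply_zero hbox]
  simp only [cutCurrent, divergence, add_sub_assoc, Finset.sum_add_distrib]
  rw [Finset.sum_comm (f := fun a b ↦ hCurrent p f a b - hCurrent p f (a - 1) b)]
  simp only [sum_Icc_sub_pred _ (show -(m : ℤ) - 1 ≤ m by omega)]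

theorem sq_divergence_le_mul_cutEnergy (hp : ∀ j, p j ∈ Ioc (0 : ℝ) (1 / 2)) {f : ℤ × ℤ → ℝ}
    {n m : ℕ} (hharm : ∀ x ∈ box n, x ≠ 0 → divergence p f x = 0) (hm : m ≤ n) :
    divergence p f 0 ^ 2 ≤ cutConductance p m * cutEnergy p f m := by
  have hC := cutConductance_pos hp m
  have hTitu : divergence p f 0 ^ 2 / cutConductance p m ≤
      ∑ j ∈ Finset.Icc (-(m : ℤ)) m, cutCurrent p f m j ^ 2 / (p j)⁻¹ := by
    rw [← sum_cutCurrent_eq_divergence hharm hm]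
    exact Finset.sq_sum_div_le_sum_sq_div _ _ fun j _ ↦ inv_pos.mpr (hp j).1
  rw [div_le_iff₀ hC, mul_comm] at hTitu
  refine hTitu.trans (mul_le_mul_of_nonneg_left (Finset.sum_le_sum fun j _ ↦ ?_) hC.le)
  rw [div_le_iff₀ (inv_pos.mpr (hp j).1), mul_comm]
  exact sq_cutCurrent_le hp f m j

/-- **Nash-Williams' inequality** for the disjoint cuts around `box m`, `m ≤ n`. -/
theorem sq_divergence_mul_le_energy (hp : ∀ j, p j ∈ Ioc (0 : ℝ) (1 / 2)) {f : ℤ × ℤ → ℝ}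
    {n : ℕ} (hharm : ∀ x ∈ box n, x ≠ 0 → divergence p f x = 0) :
    divergence p f 0 ^ 2 * ∑ m ∈ Finset.range (n + 1), (cutConductance p m)⁻¹ ≤
      energy p f n := by
  refine le_trans ?_ (sum_cutEnergy_le_energy hp f n)
  rw [Finset.mul_sum]
  refine Finset.sum_le_sum fun m hm ↦ ?_
  rw [← div_eq_mul_inv, div_le_iff₀ (cutConductance_pos hp m), mul_comm]
  exact sq_divergence_le_mul_cutEnergy hp hharm (Nat.lt_succ_iff.mp (Finset.mem_range.mp hm))

end NashWilliams

section Escape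

theorem divergence_exitProb_eq_zero (hp : ∀ j, p j ∈ Ioc (0 : ℝ) (1 / 2)) (n : ℕ) :
    ∀ x ∈ box n, x ≠ 0 → divergence p (exitProb p n) x = 0 := fun x hx hx0 ↦ by
  rw [divergence_eq hp, markovOp_exitProb hp hx0 hx, sub_self, mul_zero]

theorem markovOp_exitProb_origin_mul_le (hp : ∀ j, p j ∈ Ioc (0 : ℝ) (1 / 2)) (n : ℕ) :
    markovOp p (exitProb p n) 0 * ∑ m ∈ Finset.range (n + 1), (cutConductance p m)⁻¹ ≤ p 0 := by
  set A := ∑ m ∈ Finset.range (n + 1), (cutConductance p m)⁻¹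
  set θ := (p 0)⁻¹ * markovOp p (exitProb p n) 0
  have hp0 := (hp 0).1
  have hdiv : divergence p (exitProb p n) 0 = -θ := by
    rw [divergence_eq hp, exitProb_origin]; simp [θ]
  have hθ : 0 ≤ θ := mul_nonneg (inv_nonneg.mpr hp0.le)
    (markovOp_mem_Icc hp (exitProb_mem_Icc hp n) 0).1
  have hA : 0 ≤ A := Finset.sum_nonneg fun m _ ↦ (inv_pos.mpr (cutConductance_pos hp m)).le
  have hNW := sq_divergence_mul_le_energy hp (divergence_exitProb_eq_zero hp n)
  rw [energy_eq (fun x hx ↦ exitProb_of_notMem hx) (divergence_exitProb_eq_zero hp n), hdiv,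
    exitProb_origin] at hNW
  have hθA : θ * A ≤ 1 := by
    rcases hθ.eq_or_lt with h | h
    · rw [← h, zero_mul]; exact zero_le_one
    · nlinarith
  calc markovOp p (exitProb p n) 0 * A = p 0 * (θ * A) := by
        simp only [θ]; field_simp
    _ ≤ p 0 := mul_le_of_le_one_right hp0.le hθA

end Escape

section TransitionProb

def neighbors (x : ℤ × ℤ) : Finset (ℤ × ℤ) :=
  {(x.1 + 1, x.2), (x.1 - 1, x.2), (x.1, x.2 + 1), (x.1, x.2 - 1)}

theorem aniTransProb_of_horiz {x y : ℤ × ℤ} (h1 : y.1 = x.1 + 1 ∨ y.1 = x.1 - 1)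
    (h2 : y.2 = x.2) : aniTransProb p x y = 1 / 2 - p x.2 := by
  rw [aniTransProb, if_pos]
  rcases h1 with h1 | h1 <;> [left; right] <;> exact Prod.ext h1 h2

theorem aniTransProb_of_vert {x y : ℤ × ℤ} (h1 : y.1 = x.1)
    (h2 : y.2 = x.2 + 1 ∨ y.2 = x.2 - 1) : aniTransProb p x y = p x.2 := by
  rw [aniTransProb, if_neg, if_pos]
  · rcases h2 with h2 | h2 <;> [left; right] <;> exact Prod.ext h1 h2
  · rintro (h | h) <;> rw [h] at h1 <;> simp at h1

theorem aniTransProb_eq_zero_of_notMem {x y : ℤ × ℤ} (h : y ∉ neighbors x) :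
    aniTransProb p x y = 0 := by
  simp only [neighbors, Finset.mem_insert, Finset.mem_singleton, not_or] at h
  rw [aniTransProb, if_neg (by tauto), if_neg (by tauto)]

theorem aniTransProb_nonneg (hp : ∀ j, p j ∈ Ioc (0 : ℝ) (1 / 2)) (x y : ℤ × ℤ) :
    0 ≤ aniTransProb p x y := by
  have := hp x.2
  unfold aniTransProb
  split_ifs <;> linarith [this.1, this.2]

theorem sum_neighbors_aniTransProb_mul (f : ℤ × ℤ → ℝ) (x : ℤ × ℤ) :
    ∑ y ∈ neighbors x, aniTransProb p x y * f y = markovOp p f x := by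
  rw [neighbors, Finset.sum_insert (by simp [Prod.ext_iff]; omega),
    Finset.sum_insert (by simp [Prod.ext_iff]), Finset.sum_pair (by simp [Prod.ext_iff]; omega),
    aniTransProb_of_horiz (x := x) (y := (x.1 + 1, x.2)) (by simp) rfl,
    aniTransProb_of_horiz (x := x) (y := (x.1 - 1, x.2)) (by simp) rfl,
    aniTransProb_of_vert (x := x) (y := (x.1, x.2 + 1)) rfl (by simp),
    aniTransProb_of_vert (x := x) (y := (x.1, x.2 - 1)) rfl (by simp), markovOp]
  ring

theorem aniTransProb_mul_le_markovOp (hp : ∀ j, p j ∈ Ioc (0 : ℝ) (1 / 2)) {f : ℤ × ℤ → ℝ}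
    (hf : 0 ≤ f) (x y : ℤ × ℤ) : aniTransProb p x y * f y ≤ markovOp p f x := by
  rw [← sum_neighbors_aniTransProb_mul]
  by_cases hy : y ∈ neighbors x
  · exact Finset.single_le_sum (fun z _ ↦ mul_nonneg (aniTransProb_nonneg hp x z) (hf z)) hy
  · rw [aniTransProb_eq_zero_of_notMem hy, zero_mul]
    exact Finset.sum_nonneg fun z _ ↦ mul_nonneg (aniTransProb_nonneg hp x z) (hf z)

theorem tsum_ofReal_aniTransProb_mul (hp : ∀ j, p j ∈ Ioc (0 : ℝ) (1 / 2)) {f : ℤ × ℤ → ℝ}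
    (hf : 0 ≤ f) (x : ℤ × ℤ) :
    ∑' y, ENNReal.ofReal (aniTransProb p x y) * ENNReal.ofReal (f y) =
      ENNReal.ofReal (markovOp p f x) := by
  rw [← sum_neighbors_aniTransProb_mul, ENNReal.ofReal_sum_of_nonneg
    fun y _ ↦ mul_nonneg (aniTransProb_nonneg hp x y) (hf y)]
  refine (tsum_eq_sum fun y hy ↦ ?_).trans
    (Finset.sum_congr rfl fun y _ ↦ (ENNReal.ofReal_mul (aniTransProb_nonneg hp x y)).symm)
  rw [aniTransProb_eq_zero_of_notMem hy, ENNReal.ofReal_zero, zero_mul]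

end TransitionProb

section Harnack

variable (p) in
def Step (x y : ℤ × ℤ) : Prop := x ≠ 0 ∧ 0 < aniTransProb p x y

theorem eventually_mem_box (x : ℤ × ℤ) : ∀ᶠ n in atTop, x ∈ box n := by
  filter_upwards [eventually_ge_atTop (x.1.natAbs + x.2.natAbs)] with n hn
  rw [mem_box]
  omega

/-- Harnack's inequality: `aniTransProb p x y * v y ≤ markovOp p v x = v x` for `v = exitProb p n`
at each `x ≠ 0` inside `box n`. -/
theorem exists_mul_exitProb_le_of_reflTransGen (hp : ∀ j, p j ∈ Ioc (0 : ℝ) (1 / 2))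
    {x y : ℤ × ℤ} (h : ReflTransGen (Step p) x y) :
    ∃ ρ > 0, ∀ᶠ n in atTop, ρ * exitProb p n y ≤ exitProb p n x := by
  induction h with
  | refl => exact ⟨1, one_pos, Eventually.of_forall fun n ↦ by rw [one_mul]⟩
  | tail _ hyz ih =>
    obtain ⟨ρ, hρ, hev⟩ := ih
    refine ⟨ρ * aniTransProb p _ _, mul_pos hρ hyz.2, ?_⟩
    filter_upwards [hev, eventually_mem_box _] with n hn hbox
    calc ρ * aniTransProb p _ _ * exitProb p n _
        = ρ * (aniTransProb p _ _ * exitProb p n _) := mul_assoc _ _ _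
      _ ≤ ρ * exitProb p n _ := by
        rw [← markovOp_exitProb hp hyz.1 hbox]
        exact mul_le_mul_of_nonneg_left (aniTransProb_mul_le_markovOp hp
          (fun z ↦ (exitProb_mem_Icc hp n z).1) _ _) hρ.le
      _ ≤ exitProb p n _ := hn

theorem reflTransGen_step_of_line (f : ℤ → ℤ × ℤ) {a b : ℤ} (h0 : ∀ t ∈ uIcc a b, f t ≠ 0)
    (hpos : ∀ t, 0 < aniTransProb p (f t) (f (t + 1)) ∧ 0 < aniTransProb p (f (t + 1)) (f t)) :
    ReflTransGen (Step p) (f a) (f b) := by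
  refine ReflTransGen.lift f (r := fun s t ↦ Step p (f s) (f t)) (fun _ _ h ↦ h) _ _
    (reflTransGen_of_succ _ (fun t ht ↦ ?_) fun t ht ↦ ?_)
  · rw [Order.succ_eq_add_one]
    exact ⟨h0 t (Icc_subset_uIcc (Ico_subset_Icc_self ht)), (hpos t).1⟩
  · rw [Order.succ_eq_add_one]
    refine ⟨h0 (t + 1) (Icc_subset_uIcc' ?_), (hpos t).2⟩
    exact ⟨by linarith [ht.1], Order.add_one_le_of_lt ht.2⟩

theorem reflTransGen_step_column (hp : ∀ j, p j ∈ Ioc (0 : ℝ) (1 / 2)) (k : ℤ) {a b : ℤ}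
    (h0 : ∀ t ∈ uIcc a b, (k, t) ≠ 0) : ReflTransGen (Step p) (k, a) (k, b) :=
  reflTransGen_step_of_line (fun t ↦ (k, t)) h0 fun t ↦ by
    rw [aniTransProb_of_vert (x := (k, t)) (y := (k, t + 1)) rfl (by simp),
      aniTransProb_of_vert (x := (k, t + 1)) (y := (k, t)) rfl (by simp)]
    exact ⟨(hp t).1, (hp (t + 1)).1⟩

theorem reflTransGen_step_row {j : ℤ} (hj : p j < 1 / 2) {a b : ℤ}
    (h0 : ∀ t ∈ uIcc a b, (t, j) ≠ 0) : ReflTransGen (Step p) (a, j) (b, j) :=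
  reflTransGen_step_of_line (fun t ↦ (t, j)) h0 fun t ↦ by
    rw [aniTransProb_of_horiz (x := (t, j)) (y := (t + 1, j)) (by simp) rfl,
      aniTransProb_of_horiz (x := (t + 1, j)) (y := (t, j)) (by simp) rfl]
    exact ⟨by linarith, by linarith⟩

end Harnack

section Transience

theorem exists_unit_forall_uIcc_ne_zero {a : ℤ} (ha : a ≠ 0) :
    ∃ s : ℤ, (s = 1 ∨ s = -1) ∧ ∀ t ∈ uIcc s a, t ≠ 0 := by
  rcases ha.lt_or_gt with h | h
  · exact ⟨-1, Or.inr rfl, fun t ht ↦ by rw [mem_uIcc] at ht; omega⟩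
  · exact ⟨1, Or.inl rfl, fun t ht ↦ by rw [mem_uIcc] at ht; omega⟩

/-- Every site other than the origin is reached from a neighbour of the origin without passing
through it: move vertically, and horizontally only along a row where `p j < 1 / 2`. -/
theorem exists_reflTransGen_step (hp : ∀ j, p j ∈ Ioc (0 : ℝ) (1 / 2))
    (hpmin : ∃ j, p j < 1 / 2) {x : ℤ × ℤ} (hx : x ≠ 0) :
    ∃ y, 0 < aniTransProb p 0 y ∧ ReflTransGen (Step p) y x := by
  obtain ⟨k, j⟩ := x
  obtain ⟨r, hr⟩ := hpmin
  have hvert : ∀ s : ℤ, (s = 1 ∨ s = -1) → 0 < aniTransProb p 0 (0, s) := fun s hs ↦ by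
    rw [aniTransProb_of_vert (x := 0) (y := (0, s)) rfl (by simpa using hs)]
    exact (hp 0).1
  rcases eq_or_ne k 0 with rfl | hk
  · obtain ⟨s, hs, hs0⟩ := exists_unit_forall_uIcc_ne_zero (a := j) (by simpa using hx)
    exact ⟨(0, s), hvert s hs, reflTransGen_step_column hp 0 fun t ht ↦ by simp [hs0 t ht]⟩
  have hcol : ReflTransGen (Step p) (k, r) (k, j) :=
    reflTransGen_step_column hp k fun t _ ↦ by simp [hk]
  rcases eq_or_ne r 0 with rfl | hr0
  · obtain ⟨s, hs, hs0⟩ := exists_unit_forall_uIcc_ne_zero hk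
    refine ⟨(s, 0), ?_, (reflTransGen_step_row hr fun t ht ↦ by simp [hs0 t ht]).trans hcol⟩
    rw [aniTransProb_of_horiz (x := 0) (y := (s, 0)) (by simpa using hs) rfl]
    simpa using hr
  · obtain ⟨s, hs, hs0⟩ := exists_unit_forall_uIcc_ne_zero hr0
    refine ⟨(0, s), hvert s hs, ?_⟩
    exact ((reflTransGen_step_column hp 0 fun t ht ↦ by simp [hs0 t ht]).trans
      (reflTransGen_step_row hr fun t _ ↦ by simp [hr0])).trans hcol

theorem tendsto_exitProb_zero (hp : ∀ j, p j ∈ Ioc (0 : ℝ) (1 / 2)) (hpmin : ∃ j, p j < 1 / 2)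
    (hdiv : ¬Summable fun m ↦ (cutConductance p m)⁻¹)
    {x : ℤ × ℤ} (hx : x ≠ 0) : Tendsto (fun n ↦ exitProb p n x) atTop (𝓝 0) := by
  obtain ⟨y, hy, hpath⟩ := exists_reflTransGen_step hp hpmin hx
  obtain ⟨ρ, hρ, hev⟩ := exists_mul_exitProb_le_of_reflTransGen hp hpath
  set A := fun n ↦ ∑ m ∈ Finset.range (n + 1), (cutConductance p m)⁻¹
  have hA : Tendsto A atTop atTop :=
    ((not_summable_iff_tendsto_nat_atTop_of_nonneg fun m ↦
      (inv_pos.mpr (cutConductance_pos hp m)).le).mp hdiv).comp (tendsto_add_atTop_nat 1)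
  have hA0 : ∀ n, 0 < A n := fun n ↦
    Finset.sum_pos (fun m _ ↦ inv_pos.mpr (cutConductance_pos hp m)) ⟨0, by simp⟩
  have hbound : ∀ᶠ n in atTop, exitProb p n x ≤ p 0 / (ρ * aniTransProb p 0 y * A n) := by
    filter_upwards [hev] with n hn
    rw [le_div_iff₀ (by have := hA0 n; positivity)]
    calc exitProb p n x * (ρ * aniTransProb p 0 y * A n)
        = aniTransProb p 0 y * (ρ * exitProb p n x) * A n := by ring
      _ ≤ aniTransProb p 0 y * exitProb p n y * A n := by gcongr; exact (hA0 n).le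
      _ ≤ markovOp p (exitProb p n) 0 * A n := by
        gcongr
        · exact (hA0 n).le
        · exact aniTransProb_mul_le_markovOp hp (fun z ↦ (exitProb_mem_Icc hp n z).1) 0 y
      _ ≤ p 0 := markovOp_exitProb_origin_mul_le hp n
  exact squeeze_zero' (Eventually.of_forall fun n ↦ (exitProb_mem_Icc hp n x).1) hbound
    (tendsto_const_nhds.div_atTop (hA.const_mul_atTop (mul_pos hρ hy)))

theorem tendsto_avoidProb_univ_zero (hp : ∀ j, p j ∈ Ioc (0 : ℝ) (1 / 2))
    (hpmin : ∃ j, p j < 1 / 2)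
    (hdiv : ¬Summable fun m ↦ (cutConductance p m)⁻¹)
    (x : ℤ × ℤ) : Tendsto (fun m ↦ avoidProb p univ m x) atTop (𝓝 0) := by
  by_cases hx : x = 0
  · simp [hx, avoidProb_origin]
  have hlim := tendsto_avoidProb_iInf hp univ x
  suffices ⨅ m, avoidProb p univ m x = 0 by rwa [this] at hlim
  exact le_antisymm (ge_of_tendsto' (tendsto_exitProb_zero hp hpmin hdiv hx)
    fun n ↦ iInf_avoidProb_univ_le_exitProb hp n x)
    (le_ciInf fun m ↦ (avoidProb_mem_Icc hp univ m x).1)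

end Transience

section Walk

variable {Ω : Type*} {C : ℕ → Ω → ℤ × ℤ}

def cylinder (C : ℕ → Ω → ℤ × ℤ) (M : ℕ) (h : ℕ → ℤ × ℤ) : Set Ω := {ω | ∀ i ≤ M, C i ω = h i}

theorem cylinder_update_succ (M : ℕ) (h : ℕ → ℤ × ℤ) (y : ℤ × ℤ) :
    cylinder C M (Function.update h (M + 1) y) = cylinder C M h := by
  ext ω
  refine forall₂_congr fun i hi ↦ ?_
  rw [Function.update_of_ne (by omega)]

theorem cylinder_inter_avoid_eq_empty {M m : ℕ} {h : ℕ → ℤ × ℤ} (hM : h M = 0) :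
    cylinder C M h ∩ {ω | ∀ i ∈ Icc M (M + m), C i ω ≠ 0} = ∅ :=
  eq_empty_of_forall_notMem fun _ ⟨hcyl, havoid⟩ ↦
    havoid M ⟨le_rfl, by omega⟩ ((hcyl M le_rfl).trans hM)

variable [MeasurableSpace Ω] {P : Measure Ω}

theorem measurableSet_cylinder (hC : ∀ n, Measurable (C n)) (M : ℕ) (h : ℕ → ℤ × ℤ) :
    MeasurableSet (cylinder C M h) := by
  have : cylinder C M h = ⋂ i ∈ Iic M, C i ⁻¹' {h i} := by ext; simp [cylinder]
  rw [this]
  exact MeasurableSet.biInter (to_countable _) fun i _ ↦ hC i (measurableSet_singleton _)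

theorem _root_.IsAnisotropicWalk.measure_cylinder_succ (hw : IsAnisotropicWalk p P C) (M : ℕ)
    (h : ℕ → ℤ × ℤ) :
    P (cylinder C (M + 1) h) = ENNReal.ofReal (aniTransProb p (h M) (h (M + 1))) *
      P (cylinder C M h) := by
  unfold cylinder
  rw [← hw.step]
  congr 1
  ext ω
  simp only [Nat.le_succ_iff, or_imp, forall_and, forall_eq]

theorem measure_cylinder_inter_avoid_le (hp : ∀ j, p j ∈ Ioc (0 : ℝ) (1 / 2))
    (hw : IsAnisotropicWalk p P C) (m M : ℕ) (h : ℕ → ℤ × ℤ) :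
    P (cylinder C M h ∩ {ω | ∀ i ∈ Icc M (M + m), C i ω ≠ 0}) ≤
      P (cylinder C M h) * ENNReal.ofReal (avoidProb p univ m (h M)) := by
  induction m generalizing M h with
  | zero =>
    rcases eq_or_ne (h M) 0 with hM | hM
    · rw [cylinder_inter_avoid_eq_empty hM, measure_empty]; exact zero_le
    · rw [show avoidProb p univ 0 (h M) = 1 from if_neg hM, ENNReal.ofReal_one, mul_one]
      exact measure_mono inter_subset_left
  | succ m ih =>
    rcases eq_or_ne (h M) 0 with hM | hM
    · rw [cylinder_inter_avoid_eq_empty hM, measure_empty]; exact zero_le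
    set h' : ℤ × ℤ → ℕ → ℤ × ℤ := fun y ↦ Function.update h (M + 1) y
    have hcover : cylinder C M h ∩ {ω | ∀ i ∈ Icc M (M + (m + 1)), C i ω ≠ 0} ⊆
        ⋃ y, cylinder C (M + 1) (h' y) ∩ {ω | ∀ i ∈ Icc (M + 1) (M + 1 + m), C i ω ≠ 0} := by
      rintro ω ⟨hcyl, havoid⟩
      refine mem_iUnion.mpr ⟨C (M + 1) ω, fun i hi ↦ ?_, fun i hi ↦ havoid i ?_⟩
      · rcases Nat.le_succ_iff.mp hi with hi | rfl
        · simp only [h', Function.update_of_ne (show i ≠ M + 1 by omega), hcyl i hi]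
        · simp [h']
      · exact ⟨by linarith [hi.1], by linarith [hi.2]⟩
    calc P (cylinder C M h ∩ {ω | ∀ i ∈ Icc M (M + (m + 1)), C i ω ≠ 0})
        ≤ ∑' y, P (cylinder C (M + 1) (h' y) ∩
            {ω | ∀ i ∈ Icc (M + 1) (M + 1 + m), C i ω ≠ 0}) :=
          (measure_mono hcover).trans (measure_iUnion_le _)
      _ ≤ ∑' y, P (cylinder C (M + 1) (h' y)) * ENNReal.ofReal (avoidProb p univ m y) :=
          ENNReal.tsum_le_tsum fun y ↦ by simpa [h'] using ih (M + 1) (h' y)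
      _ = P (cylinder C M h) * ENNReal.ofReal (avoidProb p univ (m + 1) (h M)) := by
          simp only [hw.measure_cylinder_succ, h', cylinder_update_succ, Function.update_self,
            Function.update_of_ne (show M ≠ M + 1 by omega)]
          rw [avoidProb_succ_of_mem hM (mem_univ _), ← tsum_ofReal_aniTransProb_mul hp
            fun y ↦ (avoidProb_mem_Icc hp univ m y).1, ← ENNReal.tsum_mul_left]
          exact tsum_congr fun y ↦ by ring

def pathExtend {M : ℕ} (g : Fin (M + 1) → ℤ × ℤ) (i : ℕ) : ℤ × ℤ :=
  if hi : i < M + 1 then g ⟨i, hi⟩ else 0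

@[simp]
theorem pathExtend_apply {M : ℕ} (g : Fin (M + 1) → ℤ × ℤ) (i : Fin (M + 1)) :
    pathExtend g i = g i :=
  dif_pos i.is_lt

theorem measure_avoid_le_tsum (hp : ∀ j, p j ∈ Ioc (0 : ℝ) (1 / 2))
    (hw : IsAnisotropicWalk p P C) (M m : ℕ) :
    P {ω | ∀ i ∈ Icc M (M + m), C i ω ≠ 0} ≤ ∑' g : Fin (M + 1) → ℤ × ℤ,
      P (cylinder C M (pathExtend g)) * ENNReal.ofReal (avoidProb p univ m (g (Fin.last M))) := by
  have hcover : {ω | ∀ i ∈ Icc M (M + m), C i ω ≠ 0} ⊆ ⋃ g : Fin (M + 1) → ℤ × ℤ,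
      cylinder C M (pathExtend g) ∩ {ω | ∀ i ∈ Icc M (M + m), C i ω ≠ 0} := fun ω hω ↦
    mem_iUnion.mpr ⟨fun i ↦ C i ω, fun i hi ↦ by simp [pathExtend, Nat.lt_succ_of_le hi], hω⟩
  refine (measure_mono hcover).trans ((measure_iUnion_le _).trans
    (ENNReal.tsum_le_tsum fun g ↦ ?_))
  rw [← pathExtend_apply g (Fin.last M)]
  exact measure_cylinder_inter_avoid_le hp hw m M (pathExtend g)

theorem tsum_measure_cylinder_ne_top [IsFiniteMeasure P] (hC : ∀ n, Measurable (C n)) (M : ℕ) :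
    ∑' g : Fin (M + 1) → ℤ × ℤ, P (cylinder C M (pathExtend g)) ≠ ∞ := by
  rw [← measure_iUnion (fun g g' hne ↦ disjoint_left.mpr fun ω h1 h2 ↦ hne (funext fun i ↦ ?_))
    fun g ↦ measurableSet_cylinder hC M _]
  · exact measure_ne_top _ _
  · simpa using (h1 i (by omega)).symm.trans (h2 i (by omega))

theorem ae_exists_ge_eq_zero [IsFiniteMeasure P] (hp : ∀ j, p j ∈ Ioc (0 : ℝ) (1 / 2))
    (hpmin : ∃ j, p j < 1 / 2)
    (hdiv : ¬Summable fun m ↦ (cutConductance p m)⁻¹)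
    (hw : IsAnisotropicWalk p P C) (M : ℕ) : ∀ᵐ ω ∂P, ∃ i ≥ M, C i ω = 0 := by
  set F : ℕ → (Fin (M + 1) → ℤ × ℤ) → ℝ≥0∞ := fun m g ↦
    P (cylinder C M (pathExtend g)) * ENNReal.ofReal (avoidProb p univ m (g (Fin.last M)))
  have hbound : ∀ m g, F m g ≤ P (cylinder C M (pathExtend g)) := fun m g ↦
    mul_le_of_le_one_right' (ENNReal.ofReal_le_one.mpr (avoidProb_mem_Icc hp univ m _).2)
  have hterm : ∀ g, Tendsto (F · g) atTop (𝓝 0) := fun g ↦ by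
    simpa [F] using ENNReal.Tendsto.const_mul (ENNReal.tendsto_ofReal
      (tendsto_avoidProb_univ_zero hp hpmin hdiv _)) (Or.inr (measure_ne_top _ _))
  have hlim : Tendsto (fun m ↦ ∑' g, F m g) atTop (𝓝 0) := by
    simpa using ENNReal.tendsto_tsum_of_dominated_convergence _ hbound
      (tsum_measure_cylinder_ne_top hw.meas M) hterm
  rw [ae_iff]
  refine le_antisymm (ge_of_tendsto' hlim fun m ↦ ?_) zero_le
  have hsub : {ω | ¬∃ i ≥ M, C i ω = 0} ⊆ {ω | ∀ i ∈ Icc M (M + m), C i ω ≠ 0} :=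
    fun ω hω i hi hi0 ↦ hω ⟨i, hi.1, hi0⟩
  exact (measure_mono hsub).trans (measure_avoid_le_tsum hp hw M m)

end Walk

end AnisotropicWalk

end

open AnisotropicWalk

noncomputable section

/-- The anisotropic random walk on `ℤ²` with parameters `p`
is recurrent (almost surely it returns to the origin infinitely often)
provided that `∑_{k=0}^{∞} (∑_{j=-k}^{k} 1/p j)⁻¹ = ∞`. -/
theorem anisotropic_recurrent {Ω : Type*} [MeasurableSpace Ω]
    (P : Measure Ω) [IsProbabilityMeasure P]
    (p : ℤ → ℝ) (C : ℕ → Ω → ℤ × ℤ)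
    (hp1 : ∀ j, 0 < p j) (hp2 : ∀ j, p j ≤ 1 / 2) (hpmin : ∃ j, p j < 1 / 2)
    (hwalk : IsAnisotropicWalk p P C)
    (hdiv : ¬ Summable fun k : ℕ =>
      (∑ j ∈ Finset.Icc (-(k : ℤ)) (k : ℤ), (p j)⁻¹)⁻¹) :
    ∀ᵐ ω ∂P, {N : ℕ | C N ω = (0, 0)}.Infinite := by
  have hp : ∀ j, p j ∈ Ioc (0 : ℝ) (1 / 2) := fun j ↦ ⟨hp1 j, hp2 j⟩
  filter_upwards [ae_all_iff.mpr (ae_exists_ge_eq_zero hp hpmin hdiv hwalk)] with ω hω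
  exact Nat.frequently_atTop_iff_infinite.mp (frequently_atTop.mpr hω)

end
end

section
/- Let S be a simple symmetric random walk and let r(m), m = 1,2,..., be a sequence of nonnegative integer-valued random variables independent of S such that r(m) >= m^{beta} almost surely for all large enough m, where beta > 2. Then for all small enough epsilon > 0, almost surely for all large enough m, |S(r(m))| >= m^{beta/2 - 1 - epsilon}. -/
open MeasureTheory ProbabilityTheory Filter Asymptotics Set

/-!
Path counting and a bound on the central binomial coefficient give the local estimate
`P (S n = k) ≤ 1 / √(n + 1)`, hence `P (|S n| < x) ≤ (2x + 1) / √(n + 1)`. Conditioning on the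
value of the independent time `r m ≥ m ^ β` then bounds `P (|S (r m)| < m ^ α)` by a multiple of
`m ^ (α - β / 2)`, which is summable for `α = β / 2 - 1 - ε`; Borel–Cantelli concludes.
-/

open scoped ENNReal

namespace Nat

theorem centralBinom_sq_mul_le (m : ℕ) : centralBinom m ^ 2 * (3 * m + 1) ≤ 16 ^ m := by
  induction m with
  | zero => simp
  | succ m ih =>
    have hrec := succ_mul_centralBinom_succ m
    refine Nat.le_of_mul_le_mul_right ?_ (Nat.pow_pos (n := 2) m.succ_pos)
    calc centralBinom (m + 1) ^ 2 * (3 * (m + 1) + 1) * (m + 1) ^ 2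
        = ((m + 1) * centralBinom (m + 1)) ^ 2 * (3 * m + 4) := by ring
      _ = 4 * (2 * m + 1) ^ 2 * (3 * m + 4) * centralBinom m ^ 2 := by rw [hrec]; ring
      _ ≤ 16 * (m + 1) ^ 2 * (3 * m + 1) * centralBinom m ^ 2 :=
          Nat.mul_le_mul_right _ (by nlinarith)
      _ = 16 * (m + 1) ^ 2 * (centralBinom m ^ 2 * (3 * m + 1)) := by ring
      _ ≤ 16 * (m + 1) ^ 2 * 16 ^ m := by gcongr
      _ = 16 ^ (m + 1) * (m + 1) ^ 2 := by ring

theorem choose_half_sq_mul_le (n : ℕ) : n.choose (n / 2) ^ 2 * (n + 1) ≤ 4 ^ n := by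
  obtain ⟨m, rfl | rfl⟩ := n.even_or_odd'
  · have h := centralBinom_sq_mul_le m
    rw [centralBinom_eq_two_mul_choose, show 16 ^ m = 4 ^ (2 * m) by rw [pow_mul]; rfl] at h
    rw [show 2 * m / 2 = m by omega]
    nlinarith
  · have h := centralBinom_sq_mul_le (m + 1)
    have hpascal : centralBinom (m + 1) = 2 * (2 * m + 1).choose m := by
      rw [centralBinom_eq_two_mul_choose, show 2 * (m + 1) = 2 * m + 1 + 1 by ring,
        choose_succ_succ', choose_symm_half]
      ring
    rw [hpascal, show 16 ^ (m + 1) = 4 * 4 ^ (2 * m + 1) by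
      rw [pow_succ, pow_succ, pow_mul]; norm_num; ring] at h
    rw [show (2 * m + 1) / 2 = m by omega]
    nlinarith

def chooseInt (n : ℕ) (j : ℤ) : ℕ := if j < 0 then 0 else n.choose j.toNat

theorem chooseInt_succ (n : ℕ) (j : ℤ) :
    chooseInt (n + 1) j = chooseInt n (j - 1) + chooseInt n j := by
  unfold chooseInt
  rcases lt_trichotomy j 0 with hj | rfl | hj
  · simp [hj, show j - 1 < 0 by omega]
  · simp
  · obtain ⟨i, rfl⟩ : ∃ i : ℕ, j = i + 1 := ⟨j.toNat - 1, by omega⟩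
    simp [show ¬ ((i : ℤ) + 1 < 0) by omega, show ((i : ℤ) + 1).toNat = i + 1 by omega,
      choose_succ_succ']

theorem chooseInt_le_choose_half (n : ℕ) (j : ℤ) : chooseInt n j ≤ n.choose (n / 2) := by
  unfold chooseInt
  split
  · exact Nat.zero_le _
  · exact choose_le_middle _ _

end Nat

section

variable {Ω : Type*} [MeasurableSpace Ω] {μ : Measure Ω}

theorem measure_abs_lt_le_of_forall_measure_eq_le {Z : Ω → ℤ} {c : ℝ≥0∞}
    (hZ : ∀ k, μ {ω | Z ω = k} ≤ c) {x : ℝ} (hx : 0 ≤ x) :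
    μ {ω | |(Z ω : ℝ)| < x} ≤ ENNReal.ofReal (2 * x + 1) * c := by
  have hcard : ((Finset.Icc (-⌊x⌋) ⌊x⌋).card : ℝ) ≤ 2 * x + 1 := by
    have hfloor : 0 ≤ ⌊x⌋ := Int.floor_nonneg.2 hx
    rw [Int.card_Icc, ← Int.cast_natCast, Int.toNat_of_nonneg (by omega)]
    push_cast
    linarith [Int.floor_le x]
  calc μ {ω | |(Z ω : ℝ)| < x}
      ≤ μ (⋃ k ∈ Finset.Icc (-⌊x⌋) ⌊x⌋, {ω | Z ω = k}) := by
        refine measure_mono fun ω hω => mem_biUnion (x := Z ω) ?_ rfl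
        rw [Finset.mem_coe, Finset.mem_Icc, ← abs_le, Int.le_floor]
        exact_mod_cast (show |(Z ω : ℝ)| < x from hω).le
    _ ≤ ∑ k ∈ Finset.Icc (-⌊x⌋) ⌊x⌋, μ {ω | Z ω = k} := measure_biUnion_finset_le _ _
    _ ≤ ∑ _k ∈ Finset.Icc (-⌊x⌋) ⌊x⌋, c := Finset.sum_le_sum fun k _ => hZ k
    _ ≤ ENNReal.ofReal (2 * x + 1) * c := by
        rw [Finset.sum_const, nsmul_eq_mul, ← ENNReal.ofReal_natCast]
        gcongr

theorem ProbabilityTheory.IndepFun.measure_mem_and_eval_mem_le [IsProbabilityMeasure μ]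
    {α : Type*} [MeasurableSpace α] {T : Ω → ℕ} {Y : Ω → ℕ → α} (hT : Measurable T)
    (hTY : IndepFun T Y μ) {I : Set ℕ} {B : Set α} (hB : MeasurableSet B) {c : ℝ≥0∞}
    (hc : ∀ n ∈ I, μ {ω | Y ω n ∈ B} ≤ c) :
    μ {ω | T ω ∈ I ∧ Y ω (T ω) ∈ B} ≤ c := by
  calc μ {ω | T ω ∈ I ∧ Y ω (T ω) ∈ B}
      ≤ μ (⋃ n ∈ I, T ⁻¹' {n} ∩ Y ⁻¹' {y | y n ∈ B}) :=
        measure_mono fun ω ⟨hI, hY⟩ => mem_biUnion hI ⟨rfl, hY⟩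
    _ ≤ ∑' n : I, μ (T ⁻¹' {(n : ℕ)} ∩ Y ⁻¹' {y | y n ∈ B}) :=
        measure_biUnion_le _ I.to_countable _
    _ ≤ ∑' n : I, μ (T ⁻¹' {(n : ℕ)}) * c := by
        refine ENNReal.tsum_le_tsum fun n => ?_
        rw [hTY.measure_inter_preimage_eq_mul {(n : ℕ)} {y | y n ∈ B}
          (measurableSet_singleton _) (measurable_pi_apply _ hB)]
        exact mul_le_mul_right (hc n n.2) _
    _ = μ (T ⁻¹' I) * c := by
        rw [ENNReal.tsum_mul_right,
          tsum_measure_preimage_singleton I.to_countable fun n _ => hT (measurableSet_singleton n)]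
    _ ≤ c := mul_le_of_le_one_left' prob_le_one

end

namespace IsSSRW

variable {Ω : Type*} [MeasurableSpace Ω] {P : Measure Ω} {S : ℕ → Ω → ℤ}

theorem measurable_increment (hS : IsSSRW P S) (n : ℕ) :
    Measurable fun ω => S (n + 1) ω - S n ω :=
  (hS.meas (n + 1)).sub (hS.meas n)

theorem eq_sum_increments (hS : IsSSRW P S) (n : ℕ) :
    S n = ∑ i ∈ Finset.range n, fun ω => S (i + 1) ω - S i ω := by
  induction n with
  | zero => funext ω; simp [hS.init]
  | succ n ih => rw [Finset.sum_range_succ, ← ih]; funext ω; rw [Pi.add_apply]; ring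

theorem indepFun_increment (hS : IsSSRW P S) (n : ℕ) :
    IndepFun (S n) (fun ω => S (n + 1) ω - S n ω) P := by
  have h := hS.indep.indepFun_finsetSum_of_notMem hS.measurable_increment
    (s := Finset.range n) (i := n) (by simp)
  rwa [← hS.eq_sum_increments n] at h

theorem ae_increment_eq_one_or_neg_one [IsProbabilityMeasure P] (hS : IsSSRW P S) (n : ℕ) :
    ∀ᵐ ω ∂P, S (n + 1) ω - S n ω = 1 ∨ S (n + 1) ω - S n ω = -1 := by
  have hmeas (z : ℤ) : MeasurableSet {ω | S (n + 1) ω - S n ω = z} :=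
    hS.measurable_increment n (measurableSet_singleton z)
  have hdisj : Disjoint {ω | S (n + 1) ω - S n ω = 1} {ω | S (n + 1) ω - S n ω = -1} :=
    Set.disjoint_left.2 fun ω h1 h2 => by simp_all
  refine mem_ae_iff.2 ((prob_compl_eq_zero_iff ((hmeas 1).union (hmeas (-1)))).2 ?_)
  rw [measure_union hdisj (hmeas _), hS.plus, hS.minus, ENNReal.add_halves]

theorem measure_succ_eq_le [IsProbabilityMeasure P] (hS : IsSSRW P S) (n : ℕ) (k : ℤ) :
    P {ω | S (n + 1) ω = k}
      ≤ P {ω | S n ω = k - 1} * 2⁻¹ + P {ω | S n ω = k + 1} * 2⁻¹ := by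
  set X := fun ω => S (n + 1) ω - S n ω
  calc P {ω | S (n + 1) ω = k}
      ≤ P (S n ⁻¹' {k - 1} ∩ X ⁻¹' {1} ∪ S n ⁻¹' {k + 1} ∩ X ⁻¹' {-1}) := by
        refine measure_mono_ae ?_
        filter_upwards [hS.ae_increment_eq_one_or_neg_one n] with ω hω (hk : S (n + 1) ω = k)
        show ω ∈ (_ : Set Ω)
        simp only [Set.mem_ofPred_eq, Set.mem_inter_iff, Set.mem_preimage, Set.mem_singleton_iff, X]
        omega
    _ ≤ P (S n ⁻¹' {k - 1} ∩ X ⁻¹' {1}) + P (S n ⁻¹' {k + 1} ∩ X ⁻¹' {-1}) :=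
        measure_union_le _ _
    _ = P {ω | S n ω = k - 1} * 2⁻¹ + P {ω | S n ω = k + 1} * 2⁻¹ := by
        rw [(hS.indepFun_increment n).measure_inter_preimage_eq_mul _ _ .of_discrete .of_discrete,
          (hS.indepFun_increment n).measure_inter_preimage_eq_mul _ _ .of_discrete .of_discrete,
          show P (X ⁻¹' {1}) = 2⁻¹ from (hS.plus n).trans (one_div 2),
          show P (X ⁻¹' {-1}) = 2⁻¹ from (hS.minus n).trans (one_div 2)]
        rfl

/- The exact value is `n.choose ((n + k) / 2) / 2 ^ n` when `n + k` is even and `0` otherwise;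
taking the floor of `(n + k) / 2` makes the Pascal recursion hold for every `k`, so parity never
has to be tracked. -/
theorem measure_eq_le_chooseInt [IsProbabilityMeasure P] (hS : IsSSRW P S) (n : ℕ) (k : ℤ) :
    P {ω | S n ω = k} ≤ (Nat.chooseInt n ((n + k) / 2) : ℝ≥0∞) * 2⁻¹ ^ n := by
  induction n generalizing k with
  | zero =>
    by_cases hk : k = 0
    · subst hk
      simpa [Nat.chooseInt] using prob_le_one
    · simp [hS.init, Ne.symm hk]
  | succ n ih =>
    calc P {ω | S (n + 1) ω = k}
        ≤ P {ω | S n ω = k - 1} * 2⁻¹ + P {ω | S n ω = k + 1} * 2⁻¹ :=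
          hS.measure_succ_eq_le n k
      _ ≤ (Nat.chooseInt n ((n + (k - 1)) / 2) : ℝ≥0∞) * 2⁻¹ ^ n * 2⁻¹
          + (Nat.chooseInt n ((n + (k + 1)) / 2) : ℝ≥0∞) * 2⁻¹ ^ n * 2⁻¹ := by
          gcongr <;> apply ih
      _ = (Nat.chooseInt (n + 1) ((↑(n + 1) + k) / 2) : ℝ≥0∞) * 2⁻¹ ^ (n + 1) := by
          rw [Nat.chooseInt_succ, show ((n : ℤ) + (k - 1)) / 2 = (↑(n + 1) + k) / 2 - 1 by omega,
            show ((n : ℤ) + (k + 1)) / 2 = (↑(n + 1) + k) / 2 by omega]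
          push_cast
          ring

theorem measure_eq_le_inv_sqrt [IsProbabilityMeasure P] (hS : IsSSRW P S) (n : ℕ) (k : ℤ) :
    P {ω | S n ω = k} ≤ ENNReal.ofReal (√(n + 1))⁻¹ := by
  have hsq : ((n.choose (n / 2) : ℝ) / 2 ^ n) ^ 2 ≤ ((n : ℝ) + 1)⁻¹ := by
    have h : (n.choose (n / 2) : ℝ) ^ 2 * (n + 1) ≤ 4 ^ n := by
      exact_mod_cast Nat.choose_half_sq_mul_le n
    rw [div_pow, div_le_iff₀ (by positivity), inv_mul_eq_div, le_div_iff₀ (by positivity),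
      ← pow_mul, mul_comm n, pow_mul]
    exact h.trans_eq (by norm_num)
  calc P {ω | S n ω = k}
      ≤ (Nat.chooseInt n ((n + k) / 2) : ℝ≥0∞) * 2⁻¹ ^ n := hS.measure_eq_le_chooseInt n k
    _ ≤ (n.choose (n / 2) : ℝ≥0∞) * 2⁻¹ ^ n := by
        gcongr; exact_mod_cast Nat.chooseInt_le_choose_half n _
    _ = ENNReal.ofReal ((n.choose (n / 2) : ℝ) / 2 ^ n) := by
        rw [ENNReal.ofReal_div_of_pos (by positivity), ENNReal.ofReal_natCast,
          ENNReal.ofReal_pow zero_le_two, ENNReal.ofReal_ofNat, ← ENNReal.inv_pow, div_eq_mul_inv]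
    _ ≤ ENNReal.ofReal (√(n + 1))⁻¹ := by
        refine ENNReal.ofReal_le_ofReal ?_
        rw [← Real.sqrt_inv, ← Real.sqrt_sq (by positivity : (0 : ℝ) ≤ n.choose (n / 2) / 2 ^ n)]
        exact Real.sqrt_le_sqrt hsq

theorem measure_le_time_and_abs_lt_le [IsProbabilityMeasure P] (hS : IsSSRW P S)
    {T : Ω → ℕ} (hT : Measurable T) (hTS : IndepFun T (fun ω n => S n ω) P) {t x : ℝ}
    (ht : 0 < t) (hx : 0 ≤ x) :
    P {ω | t ≤ T ω ∧ |(S (T ω) ω : ℝ)| < x} ≤ ENNReal.ofReal ((2 * x + 1) / √t) := by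
  refine hTS.measure_mem_and_eval_mem_le (I := {n | t ≤ n}) (B := {z : ℤ | |(z : ℝ)| < x}) hT
    .of_discrete fun n (hn : t ≤ n) => ?_
  calc P {ω | |(S n ω : ℝ)| < x}
      ≤ ENNReal.ofReal (2 * x + 1) * ENNReal.ofReal (√(n + 1))⁻¹ :=
        measure_abs_lt_le_of_forall_measure_eq_le (hS.measure_eq_le_inv_sqrt n) hx
    _ ≤ ENNReal.ofReal ((2 * x + 1) / √t) := by
        rw [← ENNReal.ofReal_mul (by positivity), div_eq_mul_inv]
        gcongr
        linarith

end IsSSRW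

theorem Real.two_mul_rpow_add_one_div_sqrt_rpow_le {m a b : ℝ} (hm : 1 ≤ m) (ha : 0 ≤ a) :
    (2 * m ^ a + 1) / √(m ^ b) ≤ 3 * m ^ (a - b / 2) := by
  have hm0 : 0 < m := by linarith
  have hsqrt : √(m ^ b) = m ^ (b / 2) := by
    rw [Real.sqrt_eq_rpow, ← Real.rpow_mul hm0.le]
    ring_nf
  rw [hsqrt, Real.rpow_sub hm0, mul_div_assoc']
  gcongr
  linarith [Real.one_le_rpow hm ha]

/-- Let `S` be a simple symmetric random walk and `r m`,
`m = 1, 2, …`, nonnegative integer-valued random variables independent of `S`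
with `r m ≥ m ^ β` a.s. for all large `m`, where `β > 2`.  Then for all small
enough `ε > 0`, almost surely for all large `m`,
`|S (r m)| ≥ m ^ (β/2 - 1 - ε)`. -/
theorem ssrw_at_independent_time_lower_bound {Ω : Type*} [MeasurableSpace Ω]
    (P : Measure Ω) [IsProbabilityMeasure P]
    (S : ℕ → Ω → ℤ) (hS : IsSSRW P S)
    (r : ℕ → Ω → ℕ) (hrmeas : ∀ m, Measurable (r m))
    (hindep : IndepFun (fun ω (m : ℕ) => r m ω) (fun ω (n : ℕ) => S n ω) P)
    (β : ℝ) (hβ : 2 < β)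
    (hr : ∀ᵐ ω ∂P, ∀ᶠ m : ℕ in atTop, (m : ℝ) ^ β ≤ (r m ω : ℝ)) :
    ∃ ε₀ > (0 : ℝ), ∀ ε : ℝ, 0 < ε → ε < ε₀ →
      ∀ᵐ ω ∂P, ∀ᶠ m : ℕ in atTop,
        (m : ℝ) ^ (β / 2 - 1 - ε) ≤ |((S (r m ω) ω : ℤ) : ℝ)| := by
  refine ⟨β / 2 - 1, by linarith, fun ε hε hεβ => ?_⟩
  set α := β / 2 - 1 - ε with hα_def
  have hα : 0 < α := by linarith
  set A : ℕ → Set Ω := fun m => {ω | (m : ℝ) ^ β ≤ r m ω ∧ |(S (r m ω) ω : ℝ)| < (m : ℝ) ^ α}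
  have hA (m : ℕ) : P (A m) ≤ ENNReal.ofReal (3 * (m : ℝ) ^ (α - β / 2)) := by
    rcases m.eq_zero_or_pos with rfl | hm
    · have hA0 : A 0 = ∅ := eq_empty_of_forall_notMem fun ω hω =>
        (abs_nonneg _).not_gt (by simpa [Real.zero_rpow hα.ne'] using hω.2)
      simp [hA0]
    have hm1 : (1 : ℝ) ≤ m := by exact_mod_cast hm
    calc P (A m) ≤ ENNReal.ofReal ((2 * (m : ℝ) ^ α + 1) / √((m : ℝ) ^ β)) :=
          hS.measure_le_time_and_abs_lt_le (hrmeas m)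
            (hindep.comp (measurable_pi_apply m) measurable_id) (by positivity) (by positivity)
      _ ≤ ENNReal.ofReal (3 * (m : ℝ) ^ (α - β / 2)) :=
          ENNReal.ofReal_le_ofReal (Real.two_mul_rpow_add_one_div_sqrt_rpow_le hm1 hα.le)
  have hsum : ∑' m, P (A m) ≠ ∞ := by
    refine ne_top_of_le_ne_top ?_ (ENNReal.tsum_le_tsum hA)
    rw [← ENNReal.ofReal_tsum_of_nonneg (fun m => by positivity)
      ((Real.summable_nat_rpow.2 (by linarith)).mul_left 3)]
    exact ENNReal.ofReal_ne_top
  filter_upwards [hr, ae_eventually_notMem hsum] with ω hrω hAω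
  filter_upwards [hrω, hAω] with m hm hmA
  by_contra! h
  exact hmA ⟨hm, h⟩
end
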